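/- Let V be a 2n-dimensional symplectic vector space with form ω, E ∈ V* a fixed covector, S ⊆ V an m-dimensional subspace, T ⊆ V a (2n−m)-dimensional subspace with S ∩ T = {0} and flat_ω(S) = span{β₁,…,β_m} for given covectors β_a. Then there is a unique vector Γ ∈ T such that flat_ω(Γ) − E ∈ span{β₁,…,β_m}. -/

import Mathlib

/-!
Nondegeneracy makes `ω : V → V*` an isomorphism, and the dimension count makes `S ⊕ T = V`.
Writing `ω⁻¹ E = s + Γ` with `s ∈ S`, `Γ ∈ T` gives the solution `ω Γ - E = -ω s ∈ ω(S)`; any two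
solutions differ by an element of `T` whose image lies in `ω(S)`, hence of `S ∩ T = 0`.
-/

theorem LinearMap.SeparatingLeft.bijective {K V : Type*} [Field K] [AddCommGroup V] [Module K V]
    [FiniteDimensional K V] {B : V →ₗ[K] V →ₗ[K] K} (hB : B.SeparatingLeft) :
    Function.Bijective B := by
  have hinj : Function.Injective B :=
    LinearMap.ker_eq_bot.mp (LinearMap.separatingLeft_iff_ker_eq_bot.mp hB)
  exact ⟨hinj, (LinearMap.injective_iff_surjective_of_finrank_eq_finrank
    Subspace.dual_finrank_eq.symm).mp hinj⟩

namespace IsCompl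

variable {R V W : Type*} [Ring R] [AddCommGroup V] [Module R V] [AddCommGroup W] [Module R W]
  {S T : Submodule R V}

theorem existsUnique_mem_sub_mem (h : IsCompl S T) (v : V) :
    ∃! t : V, t ∈ T ∧ t - v ∈ S := by
  obtain ⟨s, hs, t, ht, rfl⟩ := Submodule.mem_sup.mp (h.sup_eq_top ▸ Submodule.mem_top (x := v))
  refine ⟨t, ⟨ht, by simpa using S.neg_mem hs⟩, ?_⟩
  rintro t' ⟨ht', hdiff⟩
  have hmem : t' - t ∈ S ⊓ T :=
    ⟨by simpa [sub_add_eq_sub_sub_swap] using S.add_mem hdiff hs, T.sub_mem ht' ht⟩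
  rwa [h.inf_eq_bot, Submodule.mem_bot, sub_eq_zero] at hmem

theorem existsUnique_mem_sub_mem_map (h : IsCompl S T) {f : V →ₗ[R] W}
    (hf : Function.Bijective f) (w : W) :
    ∃! t : V, t ∈ T ∧ f t - w ∈ S.map f := by
  obtain ⟨v, rfl⟩ := hf.2 w
  have hmap (t : V) : f t - f v ∈ S.map f ↔ t - v ∈ S := by
    rw [← map_sub, ← SetLike.mem_coe, Submodule.map_coe, hf.1.mem_set_image, SetLike.mem_coe]
  simpa only [hmap] using h.existsUnique_mem_sub_mem v

end IsCompl

theorem symplectic_characterization_unique_closed_loop_general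
    (V : Type*) [AddCommGroup V] [Module ℝ V] [FiniteDimensional ℝ V]
    (n m : ℕ) (hdim : Module.finrank ℝ V = 2 * n)
    (ω : V →ₗ[ℝ] V →ₗ[ℝ] ℝ)
    (hnd : ∀ X : V, (∀ Y : V, ω X Y = 0) → X = 0)
    (E : Module.Dual ℝ V)
    (β : Fin m → Module.Dual ℝ V)
    (S T : Submodule ℝ V)
    (hS : Module.finrank ℝ S = m)
    (hT : Module.finrank ℝ T = 2 * n - m)
    (hST : S ⊓ T = ⊥)
    (hflatS : Submodule.map ω S = Submodule.span ℝ (Set.range β)) :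
    ∃! Γ : V, Γ ∈ T ∧ (ω Γ - E) ∈ Submodule.span ℝ (Set.range β) := by
  have hω : Function.Bijective ω := LinearMap.SeparatingLeft.bijective hnd
  have hm : m ≤ 2 * n := hS ▸ hdim ▸ Submodule.finrank_le S
  have hcompl : IsCompl S T :=
    (Submodule.isCompl_iff_disjoint S T (by omega)).mpr (disjoint_iff.mpr hST)
  simpa only [hflatS] using hcompl.existsUnique_mem_sub_mem_map hω E

theorem symplectic_characterization_unique_closed_loop
    (V : Type*) [AddCommGroup V] [Module ℝ V] [FiniteDimensional ℝ V]
    (n m : ℕ) (hdim : Module.finrank ℝ V = 2 * n)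
    (ω : V →ₗ[ℝ] V →ₗ[ℝ] ℝ)
    (halt : ∀ X : V, ω X X = 0)
    (hnd : ∀ X : V, (∀ Y : V, ω X Y = 0) → X = 0)
    (E : Module.Dual ℝ V)
    (β : Fin m → Module.Dual ℝ V) (hβ : LinearIndependent ℝ β)
    (S T : Submodule ℝ V)
    (hS : Module.finrank ℝ S = m)
    (hT : Module.finrank ℝ T = 2 * n - m)
    (hST : S ⊓ T = ⊥)
    (hflatS : Submodule.map ω S = Submodule.span ℝ (Set.range β)) :
    ∃! Γ : V, Γ ∈ T ∧ (ω Γ - E) ∈ Submodule.span ℝ (Set.range β) :=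
  symplectic_characterization_unique_closed_loop_general V n m hdim ω hnd E β S T hS hT hST hflatS
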